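/- Let 1 < p < 2 with conjugate exponent q (1/p + 1/q = 1), γ > 0, X a real n×d matrix, y ∈ ℝⁿ. Define Λ(α) = (1/q)‖Xᵀα‖_q^q + (1/(2γ))‖α‖₂² − ⟨y, α⟩, let ᾱ be its minimizer and w̄ = J_q(Xᵀᾱ) the minimizer of the primal objective F(w) = (γ/2)‖Xw − y‖₂² + (1/p)‖w‖_p^p. Let δ ∈ (0,1), let (λ_m)_{m∈ℕ} be positive reals with λ := inf_m λ_m > 0 and λ_m (1−δ) < γ/2 for all m, and let (α_m)_{m∈ℕ} satisfy α_{m+1} = α_m − λ_m ∇Λ(α_m) and Λ(α_m) − Λ(α_{m+1}) ≥ λ_m (1−δ) ‖∇Λ(α_m)‖₂² for all m. Then there exists a constant C_p > 0 depending only on p such that, setting w_m = J_q(Xᵀα_m), for every m ∈ ℕ: ‖w_m − w̄‖_p² ≤ C_p^{−1} [2^p q (Λ(α₀) + (γ/2)‖y‖₂²)]^{(2−p)/p} (1 − (2/γ) λ (1−δ))^m (Λ(α₀) − Λ(ᾱ)). In particular w_m converges linearly to w̄ in the ℓ^p norm. -/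

import Mathlib

/-!
The dual objective `Λ` is `γ⁻¹`-strongly convex in first-order form: for the part
`‖Xᵀα‖_q^q / q` the tangent-line inequality is Young's inequality. Strong convexity yields
the Polyak–Łojasiewicz inequality `2γ⁻¹ (Λ α - Λ ᾱ) ≤ ‖∇Λ α‖²`, so the sufficient-decrease
condition makes the dual gap `Λ α_m - Λ ᾱ` contract by `1 - (2/γ) λ (1-δ)` at every step; it
also yields quadratic growth `‖α - ᾱ‖² ≤ 4γ (Λ α - Λ ᾱ)`. Since `q > 2`, the derivative
`(q-1)|t|^{q-2}` of `t ↦ t|t|^{q-2} = J_q(t)` is bounded on bounded sets, so `α ↦ J_q(Xᵀα)` is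
Lipschitz from `ℓ²` to `ℓ^p` on the ball around `ᾱ` that contains all iterates. Hence
`‖w_m - w̄‖_p²` is at most a constant times the dual gap, and that constant goes into `C`.
-/

open Filter Topology Asymptotics Matrix

namespace Real

theorem sign_mul_abs (a : ℝ) : Real.sign a * |a| = a := by
  rcases lt_trichotomy a 0 with h | rfl | h
  · rw [sign_of_neg h, abs_of_neg h, neg_one_mul, neg_neg]
  · rw [abs_zero, mul_zero]
  · rw [sign_of_pos h, abs_of_pos h, one_mul]

theorem sign_mul_self (a : ℝ) : Real.sign a * a = |a| := by
  rcases lt_trichotomy a 0 with h | rfl | h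
  · rw [sign_of_neg h, abs_of_neg h, neg_one_mul]
  · rw [abs_zero, mul_zero]
  · rw [sign_of_pos h, abs_of_pos h, one_mul]

theorem sign_mul_abs_rpow_sub_one (a q : ℝ) :
    Real.sign a * |a| ^ (q - 1) = a * |a| ^ (q - 2) := by
  rcases eq_or_ne a 0 with rfl | ha
  · simp
  · rw [show q - 1 = q - 2 + 1 by ring, rpow_add_one (abs_ne_zero.2 ha)]
    linear_combination |a| ^ (q - 2) * sign_mul_abs a

theorem abs_rpow_div_add_sign_mul_rpow_mul_sub_le {q : ℝ} (hq : 1 < q) (a b : ℝ) :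
    |a| ^ q / q + Real.sign a * |a| ^ (q - 1) * (b - a) ≤ |b| ^ q / q := by
  rcases eq_or_ne a 0 with rfl | ha
  · simp only [abs_zero, zero_rpow (by linarith : q ≠ 0), Real.sign_zero, zero_mul, zero_div,
      zero_add]
    positivity
  have hconj : q.HolderConjugate q.conjExponent := .conjExponent hq
  set c := Real.sign a * |a| ^ (q - 1)
  have hca : c * a = |a| ^ q := by
    rw [mul_right_comm, sign_mul_self, ← rpow_one_add' (abs_nonneg a) (by linarith)]
    ring_nf
  have hc : |c| ^ q.conjExponent = |a| ^ q := by
    have hsign : |Real.sign a| = 1 := by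
      rcases sign_apply_eq_of_ne_zero a ha with h | h <;> simp [h]
    rw [abs_mul, hsign, one_mul, abs_of_nonneg (by positivity), ← rpow_mul (abs_nonneg a),
      hconj.sub_one_mul_conj]
  have hyoung := young_inequality b c hconj
  have hsum : |a| ^ q / q + |a| ^ q / q.conjExponent = |a| ^ q := by
    rw [div_eq_mul_inv, div_eq_mul_inv, ← mul_add, hconj.inv_add_inv_eq_one, mul_one]
  rw [hc] at hyoung
  linarith [show c * (b - a) = b * c - |a| ^ q by rw [← hca]; ring]

theorem HolderConjugate.two_lt {p q : ℝ} (h : p.HolderConjugate q) (hp : p < 2) : 2 < q := by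
  rw [h.conjugate_eq, lt_div_iff₀ h.sub_one_pos]
  linarith

end Real

theorem hasDerivAt_mul_abs_rpow {e : ℝ} (he : 0 < e) (t : ℝ) :
    HasDerivAt (fun s : ℝ => s * |s| ^ e) ((e + 1) * |t| ^ e) t := by
  rcases eq_or_ne t 0 with rfl | ht
  · have hlim : Tendsto (fun s : ℝ => |s| ^ e) (𝓝 0) (𝓝 0) := by
      simpa [Real.zero_rpow he.ne'] using
        ((continuous_abs.rpow_const fun _ => Or.inr he.le).tendsto (0 : ℝ))
    rw [hasDerivAt_iff_isLittleO_nhds_zero]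
    simpa [Real.zero_rpow he.ne'] using
      (isBigO_refl (fun s : ℝ => s) (𝓝 0)).mul_isLittleO (isLittleO_one_iff ℝ |>.2 hlim)
  · have habs : HasDerivAt (fun s : ℝ => |s| ^ e) (e * |t| ^ (e - 1) * SignType.sign t) t :=
      (Real.hasDerivAt_rpow_const (Or.inl (abs_ne_zero.2 ht))).comp t (hasDerivAt_abs ht)
    refine ((hasDerivAt_id' t).mul habs).congr_deriv ?_
    rw [Real.rpow_sub_one (abs_ne_zero.2 ht)]
    calc 1 * |t| ^ e + t * (e * (|t| ^ e / |t|) * SignType.sign t)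
        = |t| ^ e + e * |t| ^ e / |t| * (t * SignType.sign t) := by ring
      _ = (e + 1) * |t| ^ e := by rw [self_mul_sign]; field_simp; ring

theorem abs_mul_abs_rpow_sub_le {e M a b : ℝ} (he : 0 < e) (ha : |a| ≤ M) (hb : |b| ≤ M) :
    |a * |a| ^ e - b * |b| ^ e| ≤ (e + 1) * M ^ e * |a - b| := by
  have hbound : ∀ x ∈ Set.Icc (-M) M, ‖(e + 1) * |x| ^ e‖ ≤ (e + 1) * M ^ e := by
    intro x hx
    rw [Real.norm_eq_abs, abs_of_nonneg (by positivity)]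
    gcongr
    exact abs_le.2 hx
  simpa only [Real.norm_eq_abs] using
    (convex_Icc (-M) M).norm_image_sub_le_of_norm_hasDerivWithin_le
      (fun x _ => (hasDerivAt_mul_abs_rpow he x).hasDerivWithinAt) hbound
      (abs_le.1 hb) (abs_le.1 ha)

variable {ι κ : Type*}

noncomputable def dualityMap (r : ℝ) (u : κ → ℝ) : κ → ℝ :=
  fun j => Real.sign (u j) * |u j| ^ (r - 1)

theorem abs_dualityMap_sub_le {q M : ℝ} (hq : 2 < q) {u v : κ → ℝ} (hu : ∀ j, |u j| ≤ M)
    (hv : ∀ j, |v j| ≤ M) (j : κ) :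
    |dualityMap q u j - dualityMap q v j| ≤ (q - 1) * M ^ (q - 2) * |u j - v j| := by
  simpa only [dualityMap, Real.sign_mul_abs_rpow_sub_one, show q - 2 + 1 = q - 1 by ring] using
    abs_mul_abs_rpow_sub_le (sub_pos.2 hq) (hu j) (hv j)

variable [Fintype ι] [Fintype κ]

theorem rpow_sum_abs_rpow_le {p T : ℝ} (hp : 0 < p) (hT : 0 ≤ T) {z : κ → ℝ}
    (hz : ∀ j, |z j| ≤ T) :
    (∑ j, |z j| ^ p) ^ (1 / p) ≤ (Fintype.card κ : ℝ) ^ (1 / p) * T := by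
  have hsum : ∑ j, |z j| ^ p ≤ Fintype.card κ * T ^ p := by
    simpa using Finset.sum_le_sum fun j (_ : j ∈ Finset.univ) =>
      Real.rpow_le_rpow (abs_nonneg (z j)) (hz j) hp.le
  calc (∑ j, |z j| ^ p) ^ (1 / p) ≤ (Fintype.card κ * T ^ p) ^ (1 / p) := by gcongr
    _ = (Fintype.card κ : ℝ) ^ (1 / p) * T := by
      rw [Real.mul_rpow (by positivity) (by positivity), ← Real.rpow_mul hT,
        mul_one_div_cancel hp.ne', Real.rpow_one]

theorem abs_transpose_mulVec_le (X : Matrix ι κ ℝ) (w : ι → ℝ) (j : κ) :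
    |(Xᵀ *ᵥ w) j| ≤ √((∑ i, ∑ k, X i k ^ 2) * ∑ i, w i ^ 2) := by
  refine Real.abs_le_sqrt ?_
  calc (Xᵀ *ᵥ w) j ^ 2 = (∑ i, X i j * w i) ^ 2 := by simp [mulVec, dotProduct]
    _ ≤ (∑ i, X i j ^ 2) * ∑ i, w i ^ 2 := Finset.sum_mul_sq_le_sq_mul_sq _ _ _
    _ ≤ (∑ i, ∑ k, X i k ^ 2) * ∑ i, w i ^ 2 := by
      gcongr with i
      exact Finset.single_le_sum (fun k _ => sq_nonneg (X i k)) (Finset.mem_univ j)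

theorem exists_sq_lpNorm_dualityMap_sub_le {p q : ℝ} (hp : 0 < p) (hq : 2 < q)
    (X : Matrix ι κ ℝ) (b : ι → ℝ) (ρ : ℝ) :
    ∃ B ≥ 0, ∀ a : ι → ℝ, ∑ i, (a i - b i) ^ 2 ≤ ρ →
      ((∑ j, |dualityMap q (Xᵀ *ᵥ a) j - dualityMap q (Xᵀ *ᵥ b) j| ^ p) ^ (1 / p)) ^ 2
        ≤ B * ∑ i, (a i - b i) ^ 2 := by
  set R := ∑ i, ∑ k, X i k ^ 2
  set M := √(R * ∑ i, b i ^ 2) + √(R * ρ)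
  set L := (q - 1) * M ^ (q - 2)
  have hR : 0 ≤ R := by positivity
  have hL : 0 ≤ L := mul_nonneg (by linarith) (by positivity)
  refine ⟨((Fintype.card κ : ℝ) ^ (1 / p) * L) ^ 2 * R, by positivity, fun a ha => ?_⟩
  set S := ∑ i, (a i - b i) ^ 2
  have hdiff : ∀ j, |(Xᵀ *ᵥ a) j - (Xᵀ *ᵥ b) j| ≤ √(R * S) := fun j => by
    rw [← Pi.sub_apply (Xᵀ *ᵥ a), ← mulVec_sub]
    exact abs_transpose_mulVec_le X (a - b) j
  have hb : ∀ j, |(Xᵀ *ᵥ b) j| ≤ M := fun j =>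
    (abs_transpose_mulVec_le X b j).trans (le_add_of_nonneg_right (Real.sqrt_nonneg _))
  have ha : ∀ j, |(Xᵀ *ᵥ a) j| ≤ M := fun j => by
    have hS : √(R * S) ≤ √(R * ρ) := by gcongr
    linarith [abs_sub_abs_le_abs_sub ((Xᵀ *ᵥ a) j) ((Xᵀ *ᵥ b) j), hdiff j,
      abs_transpose_mulVec_le X b j]
  have hJ : ∀ j, |dualityMap q (Xᵀ *ᵥ a) j - dualityMap q (Xᵀ *ᵥ b) j| ≤ L * √(R * S) :=
    fun j => (abs_dualityMap_sub_le hq ha hb j).trans (mul_le_mul_of_nonneg_left (hdiff j) hL)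
  calc _ ≤ ((Fintype.card κ : ℝ) ^ (1 / p) * (L * √(R * S))) ^ 2 := by
        gcongr
        exact rpow_sum_abs_rpow_le hp (by positivity) hJ
    _ = ((Fintype.card κ : ℝ) ^ (1 / p) * L) ^ 2 * R * S := by
        rw [mul_pow, mul_pow, Real.sq_sqrt (by positivity)]
        ring

/-- `μ`-strong convexity of `f` in tangent form, with `g u` a subgradient at `u`
(Mathlib's `StrongConvexOn` is phrased with chords instead). -/
def HasStrongSubgradient (μ : ℝ) (f : (ι → ℝ) → ℝ) (g : (ι → ℝ) → ι → ℝ) : Prop :=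
  ∀ u v, f u + ∑ i, g u i * (v i - u i) + μ / 2 * ∑ i, (v i - u i) ^ 2 ≤ f v

namespace HasStrongSubgradient

variable {μ : ℝ} {f : (ι → ℝ) → ℝ} {g : (ι → ℝ) → ι → ℝ}

theorem two_mul_sub_le (hf : HasStrongSubgradient μ f g) (hμ : 0 ≤ μ) (u v : ι → ℝ) :
    2 * μ * (f u - f v) ≤ ∑ i, g u i ^ 2 := by
  have hcoord : ∀ i, -(g u i ^ 2) ≤ 2 * μ * (g u i * (v i - u i) + μ / 2 * (v i - u i) ^ 2) :=
    fun i => by nlinarith [sq_nonneg (μ * (v i - u i) + g u i)]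
  have hsum := Finset.sum_le_sum fun i (_ : i ∈ Finset.univ) => hcoord i
  rw [Finset.sum_neg_distrib, ← Finset.mul_sum, Finset.sum_add_distrib, ← Finset.mul_sum] at hsum
  linarith [mul_le_mul_of_nonneg_left (hf u v) (by positivity : 0 ≤ 2 * μ)]

theorem mul_sum_sq_sub_le (hf : HasStrongSubgradient μ f g) {x : ι → ℝ}
    (hx : ∀ v, f x ≤ f v) (u : ι → ℝ) :
    μ * ∑ i, (u i - x i) ^ 2 ≤ 4 * (f u - f x) := by
  set m : ι → ℝ := fun i => (u i + x i) / 2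
  have hmid : ∑ i, g m i * (u i - m i) + μ / 2 * ∑ i, (u i - m i) ^ 2
      + (∑ i, g m i * (x i - m i) + μ / 2 * ∑ i, (x i - m i) ^ 2)
      = μ / 4 * ∑ i, (u i - x i) ^ 2 := by
    simp only [Finset.mul_sum, ← Finset.sum_add_distrib]
    exact Finset.sum_congr rfl fun i _ => by ring
  linarith [hf m u, hf m x, hx m]

theorem sub_le_pow_mul_sub (hf : HasStrongSubgradient μ f g) (hμ : 0 ≤ μ) {τ : ℝ} (hτ : 0 ≤ τ)
    (hτμ : 2 * μ * τ ≤ 1) {t : ℕ → ℝ} (ht : ∀ m, τ ≤ t m) {α : ℕ → ι → ℝ}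
    (hdec : ∀ m, t m * ∑ i, g (α m) i ^ 2 ≤ f (α m) - f (α (m + 1))) (x : ι → ℝ) (m : ℕ) :
    f (α m) - f x ≤ (1 - 2 * μ * τ) ^ m * (f (α 0) - f x) := by
  refine le_geom (u := fun m => f (α m) - f x) (by linarith) m fun k _ => ?_
  have hG : 0 ≤ ∑ i, g (α k) i ^ 2 := by positivity
  have hstep : τ * ∑ i, g (α k) i ^ 2 ≤ t k * ∑ i, g (α k) i ^ 2 :=
    mul_le_mul_of_nonneg_right (ht k) hG
  have hPL := mul_le_mul_of_nonneg_left (hf.two_mul_sub_le hμ (α k) x) hτ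
  linarith [hdec k]

end HasStrongSubgradient

theorem exists_pos_le_inv_mul_mul_pow_mul {a : ℕ → ℝ} {B K r e : ℝ} (hr : 0 ≤ r) (he : 0 ≤ e)
    (hK : 0 < e → 0 < K) (ha : ∀ m, a m ≤ B * (r ^ m * e)) :
    ∃ C > 0, ∀ m, a m ≤ C⁻¹ * K * r ^ m * e := by
  rcases he.eq_or_lt with rfl | he
  · exact ⟨1, one_pos, fun m => by simpa using ha m⟩
  · have hK := hK he
    refine ⟨K / (|B| + 1), by positivity, fun m => ?_⟩
    calc a m ≤ B * (r ^ m * e) := ha m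
      _ ≤ (|B| + 1) * (r ^ m * e) := by gcongr; linarith [le_abs_self B]
      _ = (K / (|B| + 1))⁻¹ * K * r ^ m * e := by field_simp

noncomputable def dualObjective (q γ : ℝ) (X : Matrix ι κ ℝ) (y α : ι → ℝ) : ℝ :=
  1 / q * ∑ j, |(Xᵀ *ᵥ α) j| ^ q + 1 / (2 * γ) * ∑ i, α i ^ 2 - ∑ i, y i * α i

noncomputable def dualGradient (q γ : ℝ) (X : Matrix ι κ ℝ) (y α : ι → ℝ) : ι → ℝ :=
  X *ᵥ dualityMap q (Xᵀ *ᵥ α) - y + γ⁻¹ • α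

theorem hasStrongSubgradient_dualObjective {q : ℝ} (hq : 1 < q) (γ : ℝ) (X : Matrix ι κ ℝ)
    (y : ι → ℝ) : HasStrongSubgradient γ⁻¹ (dualObjective q γ X y) (dualGradient q γ X y) := by
  intro u v
  set w := dualityMap q (Xᵀ *ᵥ u)
  have hadjoint : ∑ i, (X *ᵥ w) i * (v i - u i) = ∑ j, w j * ((Xᵀ *ᵥ v) j - (Xᵀ *ᵥ u) j) := by
    change (X *ᵥ w) ⬝ᵥ (v - u) = w ⬝ᵥ (Xᵀ *ᵥ v - Xᵀ *ᵥ u)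
    rw [← mulVec_sub, mulVec_transpose, dotProduct_comm, dotProduct_mulVec, dotProduct_comm]
  have htangent : 1 / q * ∑ j, |(Xᵀ *ᵥ u) j| ^ q + ∑ j, w j * ((Xᵀ *ᵥ v) j - (Xᵀ *ᵥ u) j)
      ≤ 1 / q * ∑ j, |(Xᵀ *ᵥ v) j| ^ q := by
    simp only [Finset.mul_sum, ← Finset.sum_add_distrib, one_div_mul_eq_div]
    exact Finset.sum_le_sum fun j _ => Real.abs_rpow_div_add_sign_mul_rpow_mul_sub_le hq _ _
  have hquadratic : ∑ i, dualGradient q γ X y u i * (v i - u i)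
      = ∑ i, (X *ᵥ w) i * (v i - u i)
        + (1 / (2 * γ) * ∑ i, v i ^ 2 - 1 / (2 * γ) * ∑ i, u i ^ 2
          - γ⁻¹ / 2 * ∑ i, (v i - u i) ^ 2)
        - (∑ i, y i * v i - ∑ i, y i * u i) := by
    simp only [dualGradient, Finset.mul_sum, ← Finset.sum_sub_distrib, ← Finset.sum_add_distrib]
    refine Finset.sum_congr rfl fun i _ => ?_
    simp only [Pi.add_apply, Pi.sub_apply, Pi.smul_apply, smul_eq_mul, w]
    ring
  simp only [dualObjective]
  linarith

theorem neg_le_dualObjective {q γ : ℝ} (hq : 0 ≤ q) (hγ : 0 < γ) (X : Matrix ι κ ℝ)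
    (y α : ι → ℝ) : -(γ / 2 * ∑ i, y i ^ 2) ≤ dualObjective q γ X y α := by
  have hcoord : ∀ i, y i * α i ≤ γ / 2 * y i ^ 2 + 1 / (2 * γ) * α i ^ 2 := fun i => by
    have hsq : γ / 2 * y i ^ 2 + 1 / (2 * γ) * α i ^ 2 - y i * α i
        = (γ * y i - α i) ^ 2 / (2 * γ) := by
      field_simp; ring
    linarith [hsq ▸ (by positivity : 0 ≤ (γ * y i - α i) ^ 2 / (2 * γ))]
  have hsum := Finset.sum_le_sum fun i (_ : i ∈ Finset.univ) => hcoord i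
  rw [Finset.sum_add_distrib, ← Finset.mul_sum, ← Finset.mul_sum] at hsum
  have hA : 0 ≤ 1 / q * ∑ j, |(Xᵀ *ᵥ α) j| ^ q := by positivity
  rw [dualObjective]
  linarith

theorem dual_gradient_descent_linear_convergence_general
    (p q : ℝ) (hp1 : 1 < p) (hp2 : p < 2) (hpq : 1 / p + 1 / q = 1)
    (n d : ℕ) (γ : ℝ) (hγ : 0 < γ)
    (X : Matrix (Fin n) (Fin d) ℝ) (y : Fin n → ℝ)
    (J : (Fin d → ℝ) → Fin d → ℝ)
    (hJ : ∀ u j, J u j = Real.sign (u j) * |u j| ^ (q - 1))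
    (Λ : (Fin n → ℝ) → ℝ)
    (hΛ : ∀ α, Λ α = 1 / q * ∑ j, |X.transpose.mulVec α j| ^ q
        + 1 / (2 * γ) * ∑ i, α i ^ 2 - ∑ i, y i * α i)
    (gradΛ : (Fin n → ℝ) → Fin n → ℝ)
    (hgrad : ∀ α, gradΛ α
        = X.mulVec (J (X.transpose.mulVec α)) - y + γ⁻¹ • α)
    (ᾱ : Fin n → ℝ) (hᾱ : ∀ α, Λ ᾱ ≤ Λ α)
    (wbar : Fin d → ℝ) (hwbar : wbar = J (X.transpose.mulVec ᾱ))
    (δ : ℝ) (hδ : δ ∈ Set.Ioo (0 : ℝ) 1)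
    (lamSeq : ℕ → ℝ) (lam : ℝ) (hlam : 0 < lam)
    (hlaminf : ∀ m, lam ≤ lamSeq m)
    (hlamub : ∀ m, lamSeq m * (1 - δ) < γ / 2)
    (α : ℕ → Fin n → ℝ)
    (hdec : ∀ m, lamSeq m * (1 - δ) * ∑ i, gradΛ (α m) i ^ 2
        ≤ Λ (α m) - Λ (α (m + 1))) :
    ∃ C > 0, ∀ m : ℕ,
      ((∑ j, |J (X.transpose.mulVec (α m)) j - wbar j| ^ p) ^ (1 / p)) ^ (2 : ℕ)
        ≤ C⁻¹ * ((2 : ℝ) ^ p * q * (Λ (α 0) + γ / 2 * ∑ i, y i ^ 2)) ^ ((2 - p) / p)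
            * (1 - 2 / γ * lam * (1 - δ)) ^ m * (Λ (α 0) - Λ ᾱ) := by
  obtain rfl : J = dualityMap q := funext₂ hJ
  subst hwbar
  have hconj : p.HolderConjugate q :=
    Real.holderConjugate_iff.2 ⟨hp1, by simpa only [one_div] using hpq⟩
  have hq := hconj.two_lt hp2
  have hstrong : HasStrongSubgradient γ⁻¹ Λ gradΛ := by
    rw [funext hΛ, funext hgrad]
    exact hasStrongSubgradient_dualObjective (by linarith) γ X y
  have hδ1 : 0 ≤ 1 - δ := by linarith [hδ.2]
  have hτ : 0 ≤ lam * (1 - δ) := mul_nonneg hlam.le hδ1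
  have hτγ : 2 * γ⁻¹ * (lam * (1 - δ)) ≤ 1 := by
    rw [mul_right_comm, mul_inv_le_iff₀ hγ]
    linarith [(mul_le_mul_of_nonneg_right (hlaminf 0) hδ1).trans_lt (hlamub 0)]
  rw [show 2 / γ * lam * (1 - δ) = 2 * γ⁻¹ * (lam * (1 - δ)) by ring]
  have hgeom := hstrong.sub_le_pow_mul_sub (by positivity) hτ hτγ
    (fun m => mul_le_mul_of_nonneg_right (hlaminf m) hδ1) hdec ᾱ
  have hr : 0 ≤ 1 - 2 * γ⁻¹ * (lam * (1 - δ)) := sub_nonneg.2 hτγ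
  have hr1 : 1 - 2 * γ⁻¹ * (lam * (1 - δ)) ≤ 1 := sub_le_self _ (mul_nonneg (by positivity) hτ)
  have hgap : ∀ m, Λ (α m) - Λ ᾱ ≤ Λ (α 0) - Λ ᾱ := fun m =>
    (hgeom m).trans (mul_le_of_le_one_left (sub_nonneg.2 (hᾱ _)) (pow_le_one₀ hr hr1))
  have hdist : ∀ m, ∑ i, (α m i - ᾱ i) ^ 2 ≤ γ * (4 * (Λ (α m) - Λ ᾱ)) := fun m =>
    (inv_mul_le_iff₀ hγ).1 (hstrong.mul_sum_sq_sub_le hᾱ (α m))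
  obtain ⟨B, hB0, hB⟩ :=
    exists_sq_lpNorm_dualityMap_sub_le hconj.pos hq X ᾱ (γ * (4 * (Λ (α 0) - Λ ᾱ)))
  refine exists_pos_le_inv_mul_mul_pow_mul (B := B * (γ * 4)) hr (sub_nonneg.2 (hᾱ _))
    (fun hgap0 => Real.rpow_pos_of_pos ?_ _) fun m => ?_
  · have hlow := (neg_le_dualObjective hconj.symm.pos.le hγ X y ᾱ).trans_eq (hΛ ᾱ).symm
    have hsum : 0 < Λ (α 0) + γ / 2 * ∑ i, y i ^ 2 := by linarith
    exact mul_pos (mul_pos (Real.rpow_pos_of_pos two_pos p) hconj.symm.pos) hsum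
  · have hball := (hdist m).trans <| mul_le_mul_of_nonneg_left
      (mul_le_mul_of_nonneg_left (hgap m) zero_le_four) hγ.le
    calc _ ≤ B * ∑ i, (α m i - ᾱ i) ^ 2 := hB (α m) hball
      _ ≤ B * (γ * 4) * (Λ (α m) - Λ ᾱ) :=
          (mul_le_mul_of_nonneg_left (hdist m) hB0).trans_eq (by ring)
      _ ≤ B * (γ * 4) * ((1 - 2 * γ⁻¹ * (lam * (1 - δ))) ^ m * (Λ (α 0) - Λ ᾱ)) := by
          gcongr
          exact hgeom m

/-- linear convergence of the dual gradient descent with linesearch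
for ℓ^p-regularized least squares, `1 < p < 2`, `1/p + 1/q = 1`:
with `Λ` the dual objective, `∇Λ(α) = X J_q(Xᵀα) − y + γ⁻¹α`, `ᾱ` the dual
minimizer, `w̄ = J_q(Xᵀᾱ)` the primal minimizer, stepsizes `λ_m` bounded below
by `λ > 0` and satisfying `λ_m(1−δ) < γ/2`, gradient iterates
`α_{m+1} = α_m − λ_m ∇Λ(α_m)` with sufficient decrease
`Λ(α_m) − Λ(α_{m+1}) ≥ λ_m(1−δ)‖∇Λ(α_m)‖₂²`, there exists `C_p > 0` such that,
for `w_m = J_q(Xᵀα_m)` and all `m`,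
`‖w_m − w̄‖_p² ≤ C_p⁻¹ [2^p q (Λ(α₀) + (γ/2)‖y‖₂²)]^{(2−p)/p}
   (1 − (2/γ)λ(1−δ))^m (Λ(α₀) − Λ(ᾱ))`;
in particular `w_m` converges linearly to `w̄` in the ℓ^p norm. -/
theorem dual_gradient_descent_linear_convergence
    (p q : ℝ) (hp1 : 1 < p) (hp2 : p < 2) (hpq : 1 / p + 1 / q = 1)
    (n d : ℕ) (γ : ℝ) (hγ : 0 < γ)
    (X : Matrix (Fin n) (Fin d) ℝ) (y : Fin n → ℝ)
    (J : (Fin d → ℝ) → Fin d → ℝ)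
    (hJ : ∀ u j, J u j = Real.sign (u j) * |u j| ^ (q - 1))
    (Λ : (Fin n → ℝ) → ℝ)
    (hΛ : ∀ α, Λ α = 1 / q * ∑ j, |X.transpose.mulVec α j| ^ q
        + 1 / (2 * γ) * ∑ i, α i ^ 2 - ∑ i, y i * α i)
    (gradΛ : (Fin n → ℝ) → Fin n → ℝ)
    (hgrad : ∀ α, gradΛ α
        = X.mulVec (J (X.transpose.mulVec α)) - y + γ⁻¹ • α)
    (F : (Fin d → ℝ) → ℝ)
    (hF : ∀ w, F w = γ / 2 * ∑ i, (X.mulVec w i - y i) ^ 2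
        + 1 / p * ∑ j, |w j| ^ p)
    (ᾱ : Fin n → ℝ) (hᾱ : ∀ α, Λ ᾱ ≤ Λ α)
    (wbar : Fin d → ℝ) (hwbar : wbar = J (X.transpose.mulVec ᾱ))
    (hwbarmin : ∀ w, F wbar ≤ F w)
    (δ : ℝ) (hδ : δ ∈ Set.Ioo (0 : ℝ) 1)
    (lamSeq : ℕ → ℝ) (lam : ℝ) (hlam : 0 < lam)
    (hlaminf : ∀ m, lam ≤ lamSeq m)
    (hlamub : ∀ m, lamSeq m * (1 - δ) < γ / 2)
    (α : ℕ → Fin n → ℝ)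
    (hrec : ∀ m, α (m + 1) = α m - lamSeq m • gradΛ (α m))
    (hdec : ∀ m, lamSeq m * (1 - δ) * ∑ i, gradΛ (α m) i ^ 2
        ≤ Λ (α m) - Λ (α (m + 1))) :
    ∃ C > 0, ∀ m : ℕ,
      ((∑ j, |J (X.transpose.mulVec (α m)) j - wbar j| ^ p) ^ (1 / p)) ^ (2 : ℕ)
        ≤ C⁻¹ * ((2 : ℝ) ^ p * q * (Λ (α 0) + γ / 2 * ∑ i, y i ^ 2)) ^ ((2 - p) / p)
            * (1 - 2 / γ * lam * (1 - δ)) ^ m * (Λ (α 0) - Λ ᾱ) :=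
  dual_gradient_descent_linear_convergence_general p q hp1 hp2 hpq n d γ hγ X y J hJ Λ hΛ gradΛ
    hgrad ᾱ hᾱ wbar hwbar δ hδ lamSeq lam hlam hlaminf hlamub α hdec
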